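/- arXiv:1501.03618 — 4 statements merged into one kernel-verified Lean document; each statement's English description precedes it below -/
import Mathlib

section
/- Let g > 0, h̃ > 0, ũ, ṽ ∈ ℝ, set c̃ = √(g·h̃), and let θ ∈ ℝ. Let R be the 3×3 matrix with columns r₁ = (−1, (g/c̃)·cos θ, (g/c̃)·sin θ), r₂ = (0, sin θ, −cos θ), r₃ = (1, (g/c̃)·cos θ, (g/c̃)·sin θ), and let R⁻¹ = ½·[[−1, (c̃/g)·cos θ, (c̃/g)·sin θ], [0, 2·sin θ, −2·cos θ], [1, (c̃/g)·cos θ, (c̃/g)·sin θ]] be its inverse. Then R⁻¹·A₁·R = B₁ and R⁻¹·A₂·R = B₂, where B₁ = [[ũ − c̃·cos θ, −½·h̃·sin θ, 0], [−g·sin θ, ũ, g·sin θ], [0, ½·h̃·sin θ, ũ + c̃·cos θ]] and B₂ = [[ṽ − c̃·sin θ, ½·h̃·cos θ, 0], [g·cos θ, ṽ, −g·cos θ], [0, −½·h̃·cos θ, ṽ + c̃·sin θ]]. -/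
set_option maxHeartbeats 1000000 in
/-- Similarity transformation of the Jacobians of the linearized shallow water
equations to the characteristic form: `R⁻¹·A₁·R = B₁` and `R⁻¹·A₂·R = B₂`. -/
theorem characteristic_system_matrices
    (g hT uT vT θ cT : ℝ) (hg : 0 < g) (hh : 0 < hT)
    (hc : cT = Real.sqrt (g * hT))
    (A1 A2 R Rinv B1 B2 : Matrix (Fin 3) (Fin 3) ℝ)
    (hA1 : A1 = !![uT, hT, 0; g, uT, 0; 0, 0, uT])
    (hA2 : A2 = !![vT, 0, hT; 0, vT, 0; g, 0, vT])
    (hR : R = !![(-1 : ℝ), 0, 1;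
                 g / cT * Real.cos θ, Real.sin θ, g / cT * Real.cos θ;
                 g / cT * Real.sin θ, -Real.cos θ, g / cT * Real.sin θ])
    (hRinv : Rinv = (1 / 2 : ℝ) •
        !![(-1 : ℝ), cT / g * Real.cos θ, cT / g * Real.sin θ;
           0, 2 * Real.sin θ, -2 * Real.cos θ;
           1, cT / g * Real.cos θ, cT / g * Real.sin θ])
    (hB1 : B1 = !![uT - cT * Real.cos θ, -(1 / 2) * hT * Real.sin θ, 0;
                   -(g * Real.sin θ), uT, g * Real.sin θ;
                   0, (1 / 2) * hT * Real.sin θ, uT + cT * Real.cos θ])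
    (hB2 : B2 = !![vT - cT * Real.sin θ, (1 / 2) * hT * Real.cos θ, 0;
                   g * Real.cos θ, vT, -(g * Real.cos θ);
                   0, -(1 / 2) * hT * Real.cos θ, vT + cT * Real.sin θ]) :
    Rinv * A1 * R = B1 ∧ Rinv * A2 * R = B2 := by
  have hc0 : 0 < cT := by
    rw [hc]; exact Real.sqrt_pos.mpr (mul_pos hg hh)
  have hgne : g ≠ 0 := ne_of_gt hg
  have hcne : cT ≠ 0 := ne_of_gt hc0
  have hhT : hT = cT * cT / g := by
    rw [eq_div_iff (ne_of_gt hg), mul_comm, hc]; exact (Real.mul_self_sqrt (le_of_lt (mul_pos hg hh))).symm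
  have hpyth : Real.sin θ ^ 2 + Real.cos θ ^ 2 = 1 := Real.sin_sq_add_cos_sq θ
  have hs : Real.sin θ ^ 2 = 1 - Real.cos θ ^ 2 := by linarith
  clear hc hh
  subst hhT hA1 hA2 hR hRinv hB1 hB2
  constructor <;>
  · ext i j
    rw [Matrix.smul_mul, Matrix.smul_mul]
    fin_cases i <;> fin_cases j <;> simp [Matrix.mul_apply, Fin.sum_univ_succ] <;> field_simp <;> ring_nf <;> simp only [hs] <;> ring
end

section
/- Let g ∈ ℝ and let v, hN, hS, bN, bS, UN, US ∈ ℝ satisfy v·(hN − hS) = 0 and hN + bN + UN = hS + bS + US. Then (hN·v² + ½·g·hN²) − (hS·v² + ½·g·hS²) + g·((hN + hS)/2)·((bN + UN) − (bS + US)) = 0; i.e., the difference of the y-momentum fluxes across the north and south interfaces is exactly balanced by the well-balanced discretization of the source term. -/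
/-- Discrete balance of the y-momentum flux difference and the interface-based
source term discretization (Theorem 2.1): if `v·(hN − hS) = 0` and
`hN + bN + UN = hS + bS + US`, then the flux difference is exactly balanced by
the discretized source. -/
theorem discrete_y_momentum_balance
    (g v hN hS bN bS UN US : ℝ)
    (h1 : v * (hN - hS) = 0)
    (h2 : hN + bN + UN = hS + bS + US) :
    (hN * v ^ 2 + (1 / 2) * g * hN ^ 2) - (hS * v ^ 2 + (1 / 2) * g * hS ^ 2)
      + g * ((hN + hS) / 2) * ((bN + UN) - (bS + US)) = 0 := by
  linear_combination v * h1 + g * ((hN + hS) / 2) * h2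
end

section
/- Let g ∈ ℝ, let ι be a finite index set with quadrature weights ω : ι → ℝ, and let hE, uE, vE, hW, uW, vW : ι → ℝ (east and west interface node values) and hN, vN, bN, UN, hS, vS, bS, US : ι → ℝ (north and south interface node values) satisfy, for every k ∈ ι: uE(k) = 0 and uW(k) = 0; vN(k) = vS(k); vN(k)·(hN(k) − hS(k)) = 0; and hN(k) + bN(k) + UN(k) = hS(k) + bS(k) + US(k). Then the full finite-volume y-momentum update vanishes: Σ_{k∈ι} ω(k)·(hE(k)·uE(k)·vE(k) − hW(k)·uW(k)·vW(k)) + Σ_{k∈ι} ω(k)·[(hN(k)·vN(k)² + ½·g·hN(k)²) − (hS(k)·vS(k)² + ½·g·hS(k)²) + g·((hN(k)+hS(k))/2)·((bN(k)+UN(k)) − (bS(k)+US(k)))] = 0. Consequently the cell average of the y-momentum hv is unchanged by one step of the scheme, i.e. the scheme is well-balanced for the lake at rest and the jet in the rotating frame. -/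
/-- Well-balancedness of the finite volume update for the y-momentum
(Theorem 2.1): under the discrete well-balancing conditions (c1)–(c5) the sum
of the flux differences and the interface-based source term vanishes, so the
cell average of `hv` is unchanged by one step of the scheme. -/
theorem fv_y_momentum_update_vanishes
    (g : ℝ) (ι : Type*) [Fintype ι] (ω : ι → ℝ)
    (hE uE vE hW uW vW : ι → ℝ)
    (hN vN bN UN hS vS bS US : ι → ℝ)
    (huE : ∀ k, uE k = 0) (huW : ∀ k, uW k = 0)
    (hvNS : ∀ k, vN k = vS k)
    (hvh : ∀ k, vN k * (hN k - hS k) = 0)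
    (hL : ∀ k, hN k + bN k + UN k = hS k + bS k + US k) :
    (∑ k, ω k * (hE k * uE k * vE k - hW k * uW k * vW k))
      + (∑ k, ω k *
          ((hN k * vN k ^ 2 + (1 / 2) * g * hN k ^ 2)
            - (hS k * vS k ^ 2 + (1 / 2) * g * hS k ^ 2)
            + g * ((hN k + hS k) / 2) * ((bN k + UN k) - (bS k + US k)))) = 0 := by
  have h1 : (∑ k, ω k * (hE k * uE k * vE k - hW k * uW k * vW k)) = 0 := by
    apply Finset.sum_eq_zero; intro k _; rw [huE, huW]; ring
  have h2 : (∑ k : ι, ω k *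
          ((hN k * vN k ^ 2 + (1 / 2) * g * hN k ^ 2)
            - (hS k * vS k ^ 2 + (1 / 2) * g * hS k ^ 2)
            + g * ((hN k + hS k) / 2) * ((bN k + UN k) - (bS k + US k)))) = 0 := by
    apply Finset.sum_eq_zero; intro k _
    have e1 := hvNS k
    have e2 := hvh k
    have e3 := hL k
    have ebu : bN k + UN k - (bS k + US k) = -(hN k - hS k) := by linarith
    rw [ebu, ← e1]
    linear_combination (ω k * vN k) * e2
  rw [h1, h2]; ring
end

section
/- Let c̃ > 0, r > 0, x₀ ∈ ℝ, vL, vR ∈ ℝ, K₀ ∈ ℝ, and let ℓ : ℝ → ℝ be continuous. Define the step function w : ℝ → ℝ by w(x) = vL for x < x₀ and w(x) = vR for x ≥ x₀. Then: (i) (1/2π)·∫₀^{2π} [−(K₀/c̃)·sgn(cos θ) + w(x₀ + r·cos θ)·sin θ·cos θ] dθ = 0; and (ii) (1/2π)·∫₀^{2π} [−(1/c̃)·ℓ(x₀ + r·cos θ)·sgn(sin θ) + w(x₀ + r·cos θ)·(sin²θ + ½)] dθ = (vL + vR)/2. Hence the approximate evolution operator for piecewise constant data predicts normal velocity û(P)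 = 0 and tangential velocity v̂(P) = (vL + vR)/2 at an interface point for jet data, which are the well-balancing conditions required by the finite volume step. -/
/-!
Both integrands split into terms that are odd under a reflection of `[0, 2π]`: `θ ↦ 2π - θ`
fixes `cos θ` and flips the sign of `sin θ`, while `θ ↦ π - θ` (after shifting the period to
`[-π/2, 3π/2]`) flips the sign of `cos θ`. Off the null set `{cos θ = 0}` the step data seen on
the sonic circle equals `(vL + vR)/2 + (vR - vL)/2 · sign (cos θ)`; the jump part is odd under
`θ ↦ π - θ`, so only the mean survives, against `∫₀^{2π} (sin² θ + 1/2) dθ = 2π`.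
-/

open Real MeasureTheory intervalIntegral

theorem integral_eq_zero_of_odd_about_midpoint {f : ℝ → ℝ} {a b : ℝ}
    (h : ∀ x, f (a + b - x) = -f x) : ∫ x in a..b, f x = 0 := by
  have := integral_comp_sub_left f (a + b) (a := a) (b := b)
  simp only [h, intervalIntegral.integral_neg, add_sub_cancel_right, add_sub_cancel_left] at this
  linarith

theorem Real.measurable_sign : Measurable Real.sign :=
  Measurable.ite measurableSet_Iio measurable_const
    (Measurable.ite measurableSet_Ioi measurable_const measurable_const)

theorem intervalIntegrable_sign_comp {f : ℝ → ℝ} (hf : Measurable f) (a b : ℝ) :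
    IntervalIntegrable (fun x => sign (f x)) volume a b := by
  rw [intervalIntegrable_iff, Set.uIoc]
  refine Measure.integrableOn_of_bounded (M := 1) measure_Ioc_lt_top.ne
    (measurable_sign.comp hf).aestronglyMeasurable (ae_of_all _ fun x => ?_)
  rcases sign_apply_eq (f x) with h | h | h <;> simp [h]

theorem ae_cos_ne_zero : ∀ᵐ θ : ℝ, cos θ ≠ 0 := by
  rw [ae_iff]
  refine measure_mono_null (fun θ hθ => ?_)
    ((Set.countable_range fun k : ℤ => (2 * k + 1) * π / 2).measure_zero volume)
  obtain ⟨k, rfl⟩ := cos_eq_zero_iff.1 (not_not.1 hθ)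
  exact ⟨k, rfl⟩

theorem integral_sign_cos_mul_eq_zero {h : ℝ → ℝ} (hper : Function.Periodic h (2 * π))
    (hsymm : ∀ θ, h (π - θ) = h θ) : ∫ θ in 0..2 * π, sign (cos θ) * h θ = 0 := by
  have hF : Function.Periodic (fun θ => sign (cos θ) * h θ) (2 * π) := fun θ => by
    simp only [cos_add_two_pi, hper θ]
  rw [← zero_add (2 * π), hF.intervalIntegral_add_eq 0 (-(π / 2))]
  refine integral_eq_zero_of_odd_about_midpoint fun θ => ?_
  rw [show -(π / 2) + (-(π / 2) + 2 * π) - θ = π - θ by ring, cos_pi_sub, sign_neg, hsymm]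
  ring

theorem integral_sin_sq_add_half : ∫ θ in 0..2 * π, (sin θ ^ 2 + 1 / 2) = 2 * π := by
  rw [intervalIntegral.integral_add
    ((by fun_prop : Continuous fun θ => sin θ ^ 2).intervalIntegrable _ _)
    intervalIntegrable_const,
    integral_sin_sq, intervalIntegral.integral_const]
  simp only [sin_zero, cos_zero, sin_two_pi, cos_two_pi, smul_eq_mul]
  ring

section StepOnSonicCircle

variable {f : ℝ → ℝ} {vL vR : ℝ}
  (hf : ∀ y ≠ 0, f y = (vL + vR) / 2 + (vR - vL) / 2 * sign y)
include hf

theorem integral_const_mul_sign_cos_add_comp_cos_mul_sin_mul_cos (K : ℝ) :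
    ∫ θ in 0..2 * π, (K * sign (cos θ) + f (cos θ) * sin θ * cos θ) = 0 := by
  have hsign_int : IntervalIntegrable (fun θ => sign (cos θ)) volume 0 (2 * π) :=
    intervalIntegrable_sign_comp measurable_cos _ _
  have hfcos : IntervalIntegrable (fun θ => f (cos θ)) volume 0 (2 * π) :=
    (intervalIntegrable_const.add (hsign_int.const_mul _)).congr_ae
      (ae_restrict_of_ae (ae_cos_ne_zero.mono fun θ hθ => (hf _ hθ).symm))
  have hsign : ∫ θ in 0..2 * π, sign (cos θ) = 0 := by
    simpa using integral_sign_cos_mul_eq_zero (h := fun _ => 1) (fun _ => rfl) (fun _ => rfl)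
  have hodd : ∫ θ in 0..2 * π, f (cos θ) * sin θ * cos θ = 0 :=
    integral_eq_zero_of_odd_about_midpoint fun θ => by
      rw [zero_add, cos_two_pi_sub, sin_two_pi_sub]
      ring
  rw [intervalIntegral.integral_add (hsign_int.const_mul K)
    ((hfcos.mul_continuousOn continuous_sin.continuousOn).mul_continuousOn
      continuous_cos.continuousOn), intervalIntegral.integral_const_mul, hsign, hodd]
  ring

theorem integral_comp_cos_mul_sign_sin_add_comp_cos_mul_sin_sq_add_half {ℓ : ℝ → ℝ}
    (hℓ : Continuous ℓ) :
    ∫ θ in 0..2 * π, (ℓ (cos θ) * sign (sin θ) + f (cos θ) * (sin θ ^ 2 + 1 / 2))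
      = π * (vL + vR) := by
  have hquad : Continuous fun θ => sin θ ^ 2 + 1 / 2 := by fun_prop
  have hodd : ∫ θ in 0..2 * π, ℓ (cos θ) * sign (sin θ) = 0 :=
    integral_eq_zero_of_odd_about_midpoint fun θ => by
      rw [zero_add, cos_two_pi_sub, sin_two_pi_sub, sign_neg, mul_neg]
  have hjump : ∫ θ in 0..2 * π, sign (cos θ) * (sin θ ^ 2 + 1 / 2) = 0 :=
    integral_sign_cos_mul_eq_zero (fun θ => by simp only [sin_add_two_pi])
      (fun θ => by rw [sin_pi_sub])
  have hℓint : IntervalIntegrable (fun θ => ℓ (cos θ) * sign (sin θ)) volume 0 (2 * π) :=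
    (intervalIntegrable_sign_comp measurable_sin _ _).continuousOn_mul
      (hℓ.comp continuous_cos).continuousOn
  have hmean := (hquad.intervalIntegrable (μ := volume) 0 (2 * π)).const_mul ((vL + vR) / 2)
  have hjumpint := ((intervalIntegrable_sign_comp measurable_cos 0 (2 * π)).mul_continuousOn
    hquad.continuousOn).const_mul ((vR - vL) / 2)
  calc ∫ θ in 0..2 * π, (ℓ (cos θ) * sign (sin θ) + f (cos θ) * (sin θ ^ 2 + 1 / 2))
      = ∫ θ in 0..2 * π, (ℓ (cos θ) * sign (sin θ) + ((vL + vR) / 2 * (sin θ ^ 2 + 1 / 2)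
          + (vR - vL) / 2 * (sign (cos θ) * (sin θ ^ 2 + 1 / 2)))) :=
        integral_congr_ae (ae_cos_ne_zero.mono fun θ hθ _ => by rw [hf _ hθ]; ring)
    _ = 0 + ((vL + vR) / 2 * (2 * π) + (vR - vL) / 2 * 0) := by
        rw [intervalIntegral.integral_add hℓint (hmean.add hjumpint),
          intervalIntegral.integral_add hmean hjumpint, intervalIntegral.integral_const_mul,
          intervalIntegral.integral_const_mul, hodd, hjump, integral_sin_sq_add_half]
    _ = π * (vL + vR) := by ring

end StepOnSonicCircle

theorem eg_predictor_well_balanced_jet_general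
    (cT r x₀ vL vR K₀ : ℝ) (hr : 0 < r)
    (ℓ : ℝ → ℝ) (hℓ : Continuous ℓ)
    (w : ℝ → ℝ)
    (hw : ∀ x : ℝ, w x = if x < x₀ then vL else vR) :
    -- (i) predicted normal velocity û(P) = 0
    (1 / (2 * π)) * (∫ θ in (0 : ℝ)..(2 * π),
        (-(K₀ / cT) * Real.sign (Real.cos θ)
          + w (x₀ + r * Real.cos θ) * Real.sin θ * Real.cos θ)) = 0 ∧
    -- (ii) predicted tangential velocity v̂(P) = (vL + vR)/2
    (1 / (2 * π)) * (∫ θ in (0 : ℝ)..(2 * π),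
        (-(1 / cT) * ℓ (x₀ + r * Real.cos θ) * Real.sign (Real.sin θ)
          + w (x₀ + r * Real.cos θ) * (Real.sin θ ^ 2 + 1 / 2)))
      = (vL + vR) / 2 := by
  have hstep : ∀ y ≠ 0, w (x₀ + r * y) = (vL + vR) / 2 + (vR - vL) / 2 * sign y := by
    intro y hy
    rcases hy.lt_or_gt with hy | hy
    · rw [hw, if_pos (by nlinarith), sign_of_neg hy]
      ring
    · rw [hw, if_neg (by nlinarith), sign_of_pos hy]
      ring
  refine ⟨mul_eq_zero_of_right _
    (integral_const_mul_sign_cos_add_comp_cos_mul_sin_mul_cos hstep (-(K₀ / cT))), ?_⟩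
  rw [integral_comp_cos_mul_sign_sin_add_comp_cos_mul_sin_sq_add_half hstep
    (ℓ := fun y => -(1 / cT) * ℓ (x₀ + r * y)) (by fun_prop)]
  field_simp

/-- Well-balancedness of the approximate evolution operator for piecewise
constant data at a jet interface: the predicted normal velocity vanishes and
the predicted tangential velocity is the arithmetic mean `(vL + vR)/2`. -/
theorem eg_predictor_well_balanced_jet
    (cT r x₀ vL vR K₀ : ℝ) (hc : 0 < cT) (hr : 0 < r)
    (ℓ : ℝ → ℝ) (hℓ : Continuous ℓ)
    (w : ℝ → ℝ)
    (hw : ∀ x : ℝ, w x = if x < x₀ then vL else vR) :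
    -- (i) predicted normal velocity û(P) = 0
    (1 / (2 * π)) * (∫ θ in (0 : ℝ)..(2 * π),
        (-(K₀ / cT) * Real.sign (Real.cos θ)
          + w (x₀ + r * Real.cos θ) * Real.sin θ * Real.cos θ)) = 0 ∧
    -- (ii) predicted tangential velocity v̂(P) = (vL + vR)/2
    (1 / (2 * π)) * (∫ θ in (0 : ℝ)..(2 * π),
        (-(1 / cT) * ℓ (x₀ + r * Real.cos θ) * Real.sign (Real.sin θ)
          + w (x₀ + r * Real.cos θ) * (Real.sin θ ^ 2 + 1 / 2)))
      = (vL + vR) / 2 :=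
  eg_predictor_well_balanced_jet_general cT r x₀ vL vR K₀ hr ℓ hℓ w hw
end
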